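/- Let F and θ be integers with θ ≥ 1, F odd and F ≥ 2θ + 1. Then W(F,θ) ≥ ∑_{j=0}^{θ} (F − 2(θ + j))·p_j + (F − 4θ + 2)·∑_{j=θ+1}^{(F−1)/2} p_j, where the second sum is empty (equal to zero) when θ + 1 > (F−1)/2. (This is the folding inequality obtained from the symmetry p_j = p_{F−j} of the Binomial(F,1/2) mass function.) -/

import Mathlib

/-- `p F j` is the probability mass function of the Binomial(F,1/2) distribution. -/
def binomHalf (F j : ℕ) : ℚ := (F.choose j : ℚ) * (1/2) ^ F

/-- The expected weight `W (F,θ)` of an edge under the uniform product measure. -/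
def expectedWeight (F θ : ℕ) : ℚ :=
  (∑ j ∈ Finset.range (θ + 1), (-(j : ℚ)) * binomHalf F j)
    + ∑ j ∈ Finset.Icc (θ + 1) F,
        ((j : ℚ) + 2 * (1 - (j : ℚ) / (F : ℚ) - (θ : ℚ))) * binomHalf F j

/-!
Write `F = 2m + 1`. Pairing `j` with `F - j` and using `p_j = p_{F-j}`, the sum over `j > θ`
in `W(F, θ)` folds onto `j ≤ m`: the indices `j ≤ θ` receive the weight of `F - j` on top of
their own `-j`, and each pair `θ < j ≤ m`, `F - j` carries total weight exactly `F - 4θ + 2`.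
For `j ≤ θ` the folded coefficient is `F - 2(θ + j) + 2 j / F ≥ F - 2(θ + j)`.
-/

open Finset

theorem Finset.sum_Icc_fold_odd {M : Type*} [AddCommMonoid M] (g : ℕ → M) {F θ m : ℕ}
    (hF : F = 2 * m + 1) (h : θ ≤ m) :
    ∑ j ∈ Icc (θ + 1) F, g j
      = ∑ j ∈ range (θ + 1), g (F - j) + ∑ j ∈ Icc (θ + 1) m, (g j + g (F - j)) := by
  subst hF
  have hlow : ∑ j ∈ range (θ + 1), g (2 * m + 1 - j)
      = ∑ j ∈ Ico (2 * m + 1 - θ) (2 * m + 1 + 1), g j := by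
    rw [range_eq_Ico, sum_Ico_reflect _ _ (by omega)]
    congr 2; omega
  have hmid : ∑ j ∈ Icc (θ + 1) m, g (2 * m + 1 - j)
      = ∑ j ∈ Ico (m + 1) (2 * m + 1 - θ), g j := by
    rw [← Ico_add_one_right_eq_Icc, sum_Ico_reflect _ _ (by omega)]
    congr 2 <;> omega
  rw [sum_add_distrib, hlow, hmid, ← Ico_add_one_right_eq_Icc, ← Ico_add_one_right_eq_Icc,
    ← sum_Ico_consecutive g (by omega : θ + 1 ≤ m + 1) (by omega : m + 1 ≤ 2 * m + 1 + 1),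
    ← sum_Ico_consecutive g (by omega : m + 1 ≤ 2 * m + 1 - θ) (by omega)]
  abel

theorem binomHalf_nonneg (F j : ℕ) : 0 ≤ binomHalf F j := by
  unfold binomHalf; positivity

theorem binomHalf_sub {F j : ℕ} (h : j ≤ F) : binomHalf F (F - j) = binomHalf F j := by
  rw [binomHalf, binomHalf, Nat.choose_symm h]

def upperWeight (F θ j : ℕ) : ℚ := (j : ℚ) + 2 * (1 - (j : ℚ) / (F : ℚ) - (θ : ℚ))

theorem upperWeight_add_upperWeight_sub {F j : ℕ} (θ : ℕ) (hF : F ≠ 0) (hj : j ≤ F) :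
    upperWeight F θ j + upperWeight F θ (F - j) = F - 4 * θ + 2 := by
  rw [upperWeight, upperWeight, Nat.cast_sub hj]
  field_simp
  ring

theorem sub_two_mul_le_upperWeight_sub {F j : ℕ} (θ : ℕ) (hj : j ≤ F) :
    (F : ℚ) - 2 * (θ + j) ≤ -j + upperWeight F θ (F - j) := by
  have hfrac : ((F - j : ℕ) : ℚ) / F ≤ 1 :=
    div_le_one_of_le₀ (by exact_mod_cast F.sub_le j) F.cast_nonneg
  rw [upperWeight, Nat.cast_sub hj] at *
  linarith

theorem expectedWeight_eq_sum_upperWeight (F θ : ℕ) :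
    expectedWeight F θ = ∑ j ∈ range (θ + 1), -j * binomHalf F j
      + ∑ j ∈ Icc (θ + 1) F, upperWeight F θ j * binomHalf F j :=
  rfl

theorem expectedWeight_eq_fold {F θ m : ℕ} (hF : F = 2 * m + 1) (h : θ ≤ m) :
    expectedWeight F θ
      = ∑ j ∈ range (θ + 1), (-j + upperWeight F θ (F - j)) * binomHalf F j
        + ∑ j ∈ Icc (θ + 1) m, (upperWeight F θ j + upperWeight F θ (F - j)) * binomHalf F j := by
  rw [expectedWeight_eq_sum_upperWeight,
    sum_Icc_fold_odd (fun j => upperWeight F θ j * binomHalf F j) hF h]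
  have hlow : ∀ j ∈ range (θ + 1),
      upperWeight F θ (F - j) * binomHalf F (F - j) = upperWeight F θ (F - j) * binomHalf F j := by
    intro j hj
    rw [binomHalf_sub (by have := mem_range.mp hj; omega)]
  have hmid : ∀ j ∈ Icc (θ + 1) m,
      upperWeight F θ j * binomHalf F j + upperWeight F θ (F - j) * binomHalf F (F - j)
        = (upperWeight F θ j + upperWeight F θ (F - j)) * binomHalf F j := by
    intro j hj
    rw [binomHalf_sub (by have := (mem_Icc.mp hj).2; omega), add_mul]
  rw [sum_congr rfl hlow, sum_congr rfl hmid, ← add_assoc, ← sum_add_distrib]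
  simp only [add_mul]

theorem expectedWeight_folding_bound_general (F θ : ℕ) (hodd : Odd F)
    (hF : 2 * θ + 1 ≤ F) :
    (∑ j ∈ Finset.range (θ + 1), ((F : ℚ) - 2 * ((θ : ℚ) + (j : ℚ))) * binomHalf F j)
      + ((F : ℚ) - 4 * (θ : ℚ) + 2) * ∑ j ∈ Finset.Icc (θ + 1) ((F - 1) / 2), binomHalf F j
    ≤ expectedWeight F θ := by
  obtain ⟨m, hm⟩ := hodd
  rw [show (F - 1) / 2 = m by omega, expectedWeight_eq_fold hm (by omega), mul_sum]
  refine add_le_add (sum_le_sum fun j hj => ?_) (sum_le_sum fun j hj => ?_) <;>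
    simp only [mem_range, mem_Icc] at hj
  · exact mul_le_mul_of_nonneg_right (sub_two_mul_le_upperWeight_sub θ (by omega))
      (binomHalf_nonneg _ _)
  · rw [upperWeight_add_upperWeight_sub θ (by omega) (by omega)]

theorem expectedWeight_folding_bound (F θ : ℕ) (hθ : 1 ≤ θ) (hodd : Odd F)
    (hF : 2 * θ + 1 ≤ F) :
    (∑ j ∈ Finset.range (θ + 1), ((F : ℚ) - 2 * ((θ : ℚ) + (j : ℚ))) * binomHalf F j)
      + ((F : ℚ) - 4 * (θ : ℚ) + 2) * ∑ j ∈ Finset.Icc (θ + 1) ((F - 1) / 2), binomHalf F j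
    ≤ expectedWeight F θ :=
  expectedWeight_folding_bound_general F θ hodd hF
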